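/- arXiv:1911.10475 — 4 statements merged into one kernel-verified Lean document; each statement's English description precedes it below -/
import Mathlib

section
/- If a_n > 0, ∑ a_n^{-1} < ∞, and ∑ |k_n − 1| < ∞ with k_n = a_n/√(a_{n-1} a_{n+1}), then ∑ |κ_{n+1} − κ_n| < ∞, where κ_n = √(a_{n+1}/a_n). -/
/-!
Since `κ_{n+1} = κ_n / k_n`, the sequence `κ` is a product of factors `1/k_j` with
`∑ |1/k_j - 1| < ∞`; hence `κ_n ≤ κ_0 exp (∑ |1/k_j - 1|)` is bounded, and
`|κ_{n+1} - κ_n| = κ_n |1/k_n - 1|` is summable.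
-/

open Filter

theorem Summable.abs_inv_sub_one {k : ℕ → ℝ} (hk : Summable fun n => |k n - 1|) :
    Summable fun n => |(k n)⁻¹ - 1| := by
  have hk_near_one : ∀ᶠ n in atTop, |k n - 1| < 1 / 2 :=
    hk.tendsto_atTop_zero.eventually (eventually_lt_nhds (by norm_num))
  refine (hk.mul_left 2).of_norm_bounded_eventually_nat ?_
  filter_upwards [hk_near_one] with n hn
  have hk_half : 1 / 2 < k n := by linarith [(abs_lt.mp hn).1]
  have hk_pos : 0 < k n := by linarith
  have hinv : (k n)⁻¹ - 1 = (1 - k n) / k n := by field_simp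
  rw [Real.norm_eq_abs, abs_abs, hinv, abs_div, abs_of_pos hk_pos, abs_sub_comm,
    div_le_iff₀ hk_pos]
  nlinarith [abs_nonneg (k n - 1)]

section ProductRecursion

variable {x c : ℕ → ℝ} (hx : ∀ n, x (n + 1) = x n * c n)
include hx

theorem abs_le_mul_exp_sum_of_succ_eq_mul (n : ℕ) :
    |x n| ≤ |x 0| * Real.exp (∑ j ∈ Finset.range n, |c j - 1|) := by
  induction n with
  | zero => simp
  | succ n ih =>
    have hc : |c n| ≤ Real.exp |c n - 1| := calc
      |c n| = |1 + (c n - 1)| := by ring_nf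
      _ ≤ 1 + |c n - 1| := by simpa using abs_add_le 1 (c n - 1)
      _ ≤ Real.exp |c n - 1| := by linarith [Real.add_one_le_exp |c n - 1|]
    calc |x (n + 1)| = |x n| * |c n| := by rw [hx, abs_mul]
      _ ≤ (|x 0| * Real.exp (∑ j ∈ Finset.range n, |c j - 1|)) * Real.exp |c n - 1| :=
        mul_le_mul ih hc (abs_nonneg _) (by positivity)
      _ = |x 0| * Real.exp (∑ j ∈ Finset.range (n + 1), |c j - 1|) := by
        rw [Finset.sum_range_succ, Real.exp_add, mul_assoc]

theorem summable_abs_sub_of_succ_eq_mul (hc : Summable fun n => |c n - 1|) :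
    Summable fun n => |x (n + 1) - x n| := by
  obtain ⟨B, hbound⟩ : ∃ B, ∀ n, |x n| ≤ B :=
    ⟨|x 0| * Real.exp (∑' j, |c j - 1|), fun n =>
      (abs_le_mul_exp_sum_of_succ_eq_mul hx n).trans <| by
        gcongr
        exact hc.sum_le_tsum _ fun j _ => abs_nonneg _⟩
  refine (hc.mul_left B).of_nonneg_of_le (fun n => abs_nonneg _) fun n => ?_
  calc |x (n + 1) - x n| = |x n| * |c n - 1| := by rw [hx, ← mul_sub_one, abs_mul]
    _ ≤ B * |c n - 1| := by gcongr; exact hbound n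

end ProductRecursion

theorem sqrt_div_succ_eq_mul_inv {a : ℕ → ℝ} (ha : ∀ n, 0 < a n) (n : ℕ) :
    Real.sqrt (a (n + 2) / a (n + 1)) =
      Real.sqrt (a (n + 1) / a n) * (a (n + 1) / Real.sqrt (a n * a (n + 2)))⁻¹ := by
  have h0 := ha n
  have h1 := ha (n + 1)
  have h2 := ha (n + 2)
  rw [← Real.sqrt_sq (by positivity :
    0 ≤ Real.sqrt (a (n + 1) / a n) * (a (n + 1) / Real.sqrt (a n * a (n + 2)))⁻¹)]
  congr 1
  rw [mul_pow, inv_pow, div_pow, Real.sq_sqrt (by positivity), Real.sq_sqrt (by positivity)]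
  field_simp

theorem kappa_diff_summable_general (a : ℕ → ℝ) (ha : ∀ n, 0 < a n)
    (hk : Summable fun n => |a (n + 1) / Real.sqrt (a n * a (n + 2)) - 1|) :
    Summable fun n => |Real.sqrt (a (n + 2) / a (n + 1)) - Real.sqrt (a (n + 1) / a n)| :=
  summable_abs_sub_of_succ_eq_mul (x := fun n => Real.sqrt (a (n + 1) / a n))
    (sqrt_div_succ_eq_mul_inv ha) hk.abs_inv_sub_one

/-- If `a_n > 0`, `∑ a_n⁻¹ < ∞` and `∑ |k_n − 1| < ∞` with `k_n = a_n/√(a_{n-1}a_{n+1})`,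
then the differences of `κ_n = √(a_{n+1}/a_n)` are absolutely summable. -/
theorem kappa_diff_summable (a : ℕ → ℝ) (ha : ∀ n, 0 < a n)
    (hsum : Summable fun n => (a n)⁻¹)
    (hk : Summable fun n => |a (n + 1) / Real.sqrt (a n * a (n + 2)) - 1|) :
    Summable fun n => |Real.sqrt (a (n + 2) / a (n + 1)) - Real.sqrt (a (n + 1) / a n)| :=
  kappa_diff_summable_general a ha hk
end

section
/- Let β_n be a real sequence with |1 − β_n²| ≥ c > 0 for all large n, and define ζ_n = β_n − i√(1−β_n²) if |β_n| ≤ 1 and ζ_n = sgn(β_n)(|β_n| − √(β_n²−1)) if |β_n| > 1 (with all β_n eventually on the same side of 1 in absolute value). Then |ζ_{n-1}^{-1} − ζ_n^{-1}| ≤ C |β_{n-1} − β_n| for large n, with a constant C depending only on c. -/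
/-!
Both `ζ = ζ_{n-1}` and `ζ' = ζ_n` are roots of `z² - 2βz + 1`, i.e. `(z - β)² = β² - 1`;
subtracting the two quadratic relations gives `(ζ⁻¹ - ζ'⁻¹)(1 - ζζ') = 2(β_{n-1} - β_n)`, so
it suffices to bound `‖1 - ζζ'‖` from below in terms of `c`. On the unit circle
`Re (1 - ζζ') = 1 - ββ' + √(1-β²)√(1-β'²) ≥ 2c`; on the real line
`|ζ| = 1 / (|β| + √(β²-1)) ≤ 1 / (1 + √c)`, so `‖1 - ζζ'‖ ≥ 1 - 1 / (1 + √c)`.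
-/

noncomputable section

/-- The branch `ζ_n` (with `|ζ_n| ≤ 1`) of the solutions of `ζ + ζ⁻¹ = 2 β_n`. -/
def zetaSeq (β : ℕ → ℝ) (n : ℕ) : ℂ :=
  if |β n| ≤ 1 then (β n : ℂ) - Complex.I * Real.sqrt (1 - (β n) ^ 2)
  else (Real.sign (β n) * (|β n| - Real.sqrt ((β n) ^ 2 - 1)) : ℝ)

open Complex

lemma inv_sub_inv_mul_one_sub_mul {K : Type*} [Field K] {z w a b : K}
    (hz : (z - a) ^ 2 = a ^ 2 - 1) (hw : (w - b) ^ 2 = b ^ 2 - 1) :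
    (z⁻¹ - w⁻¹) * (1 - z * w) = 2 * (a - b) := by
  have hz0 : z ≠ 0 := by rintro rfl; exact one_ne_zero (by linear_combination hz)
  have hw0 : w ≠ 0 := by rintro rfl; exact one_ne_zero (by linear_combination hw)
  field_simp
  linear_combination w * hz - z * hw

lemma norm_inv_sub_inv_le {z w : ℂ} {a b δ : ℝ}
    (hz : (z - a) ^ 2 = a ^ 2 - 1) (hw : (w - b) ^ 2 = b ^ 2 - 1)
    (hδ : 0 < δ) (h : δ ≤ ‖1 - z * w‖) :
    ‖z⁻¹ - w⁻¹‖ ≤ 2 / δ * |a - b| := by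
  have key : ‖z⁻¹ - w⁻¹‖ * ‖1 - z * w‖ = 2 * |a - b| := by
    rw [← norm_mul, inv_sub_inv_mul_one_sub_mul hz hw, ← ofReal_sub, norm_mul,
      norm_real, Real.norm_eq_abs]
    norm_num
  rw [div_mul_eq_mul_div, le_div_iff₀ hδ, ← key]
  gcongr

lemma zetaSeq_of_abs_le_one {β : ℕ → ℝ} {n : ℕ} (h : |β n| ≤ 1) :
    zetaSeq β n = β n - I * √(1 - β n ^ 2) :=
  if_pos h

lemma zetaSeq_of_one_lt_abs {β : ℕ → ℝ} {n : ℕ} (h : 1 < |β n|) :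
    zetaSeq β n = (Real.sign (β n) * (|β n| - √(β n ^ 2 - 1)) : ℝ) :=
  if_neg h.not_ge

lemma sq_zetaSeq_sub (β : ℕ → ℝ) (n : ℕ) : (zetaSeq β n - β n) ^ 2 = β n ^ 2 - 1 := by
  rcases le_or_gt |β n| 1 with h | h
  · have hs : (√(1 - β n ^ 2) : ℂ) ^ 2 = 1 - β n ^ 2 := by
      rw [← ofReal_pow, Real.sq_sqrt (sub_nonneg.2 (sq_le_one_iff_abs_le_one _ |>.2 h))]
      push_cast; ring
    rw [zetaSeq_of_abs_le_one h]
    linear_combination (-1 : ℂ) * hs + (√(1 - β n ^ 2) : ℂ) ^ 2 * I_sq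
  · have hs : √(β n ^ 2 - 1) ^ 2 = β n ^ 2 - 1 :=
      Real.sq_sqrt (sub_nonneg.2 (one_lt_sq_iff_one_lt_abs _ |>.2 h).le)
    rw [zetaSeq_of_one_lt_abs h]
    norm_cast
    rcases lt_or_gt_of_ne (show β n ≠ 0 by rintro h0; norm_num [h0] at h) with hneg | hpos
    · rw [Real.sign_of_neg hneg, abs_of_neg hneg]
      linear_combination hs
    · rw [Real.sign_of_pos hpos, abs_of_pos hpos]
      linear_combination hs

lemma abs_sub_sqrt_sq_sub_one_le {x c : ℝ} (hx : 1 < |x|) (hc : c ≤ x ^ 2 - 1) :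
    |x| - √(x ^ 2 - 1) ≤ (1 + √c)⁻¹ := by
  have hq : √(x ^ 2 - 1) ^ 2 = x ^ 2 - 1 :=
    Real.sq_sqrt (sub_nonneg.2 (one_lt_sq_iff_one_lt_abs x |>.2 hx).le)
  have hsum : 1 + √c ≤ |x| + √(x ^ 2 - 1) := add_le_add hx.le (Real.sqrt_le_sqrt hc)
  have hprod : (|x| - √(x ^ 2 - 1)) * (|x| + √(x ^ 2 - 1)) = 1 := by
    linear_combination sq_abs x - hq
  rw [eq_inv_of_mul_eq_one_left hprod]
  exact inv_anti₀ (by positivity) hsum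

lemma two_mul_le_one_sub_mul_add_sqrt_mul_sqrt {a b c : ℝ} (hc : 0 ≤ c)
    (ha : c ≤ 1 - a ^ 2) (hb : c ≤ 1 - b ^ 2) :
    2 * c ≤ 1 - a * b + √(1 - a ^ 2) * √(1 - b ^ 2) := by
  have hst : c ≤ √(1 - a ^ 2) * √(1 - b ^ 2) := by
    rw [← Real.sqrt_mul (by linarith), ← Real.sqrt_mul_self hc]
    exact Real.sqrt_le_sqrt (mul_le_mul ha hb hc (by linarith))
  nlinarith [sq_nonneg (a - b)]

lemma norm_zetaSeq_le {β : ℕ → ℝ} {c : ℝ} {n : ℕ} (h : 1 < |β n|)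
    (hc : c ≤ β n ^ 2 - 1) :
    ‖zetaSeq β n‖ ≤ (1 + √c)⁻¹ := by
  have hq : √(β n ^ 2 - 1) ≤ |β n| := by
    rw [← Real.sqrt_sq_eq_abs]
    exact Real.sqrt_le_sqrt (sub_le_self _ zero_le_one)
  have hsign : |Real.sign (β n)| ≤ 1 := by
    rcases Real.sign_apply_eq (β n) with hs | hs | hs <;> simp [hs]
  rw [zetaSeq_of_one_lt_abs h, norm_real, Real.norm_eq_abs, abs_mul,
    abs_of_nonneg (sub_nonneg.2 hq)]
  exact (mul_le_of_le_one_left (sub_nonneg.2 hq) hsign).trans (abs_sub_sqrt_sq_sub_one_le h hc)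

lemma two_mul_le_norm_one_sub_zetaSeq_mul {β : ℕ → ℝ} {c : ℝ} {m n : ℕ} (hc : 0 ≤ c)
    (hm : |β m| ≤ 1) (hn : |β n| ≤ 1) (hcm : c ≤ |1 - β m ^ 2|)
    (hcn : c ≤ |1 - β n ^ 2|) :
    2 * c ≤ ‖1 - zetaSeq β m * zetaSeq β n‖ := by
  rw [abs_of_nonneg (sub_nonneg.2 (sq_le_one_iff_abs_le_one _ |>.2 hm))] at hcm
  rw [abs_of_nonneg (sub_nonneg.2 (sq_le_one_iff_abs_le_one _ |>.2 hn))] at hcn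
  refine le_trans ?_ (re_le_norm _)
  rw [zetaSeq_of_abs_le_one hm, zetaSeq_of_abs_le_one hn]
  have hre := two_mul_le_one_sub_mul_add_sqrt_mul_sqrt hc hcm hcn
  simp only [sub_re, sub_im, one_re, mul_re, mul_im, ofReal_re, ofReal_im, I_re, I_im]
  linarith

lemma one_sub_inv_le_norm_one_sub_zetaSeq_mul {β : ℕ → ℝ} {c : ℝ} {m n : ℕ}
    (hm : 1 < |β m|) (hn : 1 < |β n|) (hcm : c ≤ |1 - β m ^ 2|) (hcn : c ≤ |1 - β n ^ 2|) :
    1 - (1 + √c)⁻¹ ≤ ‖1 - zetaSeq β m * zetaSeq β n‖ := by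
  rw [abs_sub_comm, abs_of_nonneg (sub_nonneg.2 (one_lt_sq_iff_one_lt_abs _ |>.2 hm).le)] at hcm
  rw [abs_sub_comm, abs_of_nonneg (sub_nonneg.2 (one_lt_sq_iff_one_lt_abs _ |>.2 hn).le)] at hcn
  have hr : (1 + √c)⁻¹ ≤ 1 := inv_le_one_of_one_le₀ (by simp)
  have hm' := norm_zetaSeq_le hm hcm
  have hn' := norm_zetaSeq_le hn hcn
  calc 1 - (1 + √c)⁻¹ ≤ ‖(1 : ℂ)‖ - ‖zetaSeq β m‖ * ‖zetaSeq β n‖ := by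
        rw [norm_one]
        nlinarith [norm_nonneg (zetaSeq β m), norm_nonneg (zetaSeq β n)]
    _ ≤ ‖1 - zetaSeq β m * zetaSeq β n‖ := by
        rw [← norm_mul]; exact norm_sub_norm_le _ _

/-- If `|1 − β_n²| ≥ c > 0` for `n ≥ N` and all `β_n`, `n ≥ N`, lie on the same side of `1`
in absolute value, then `|ζ_{n-1}⁻¹ − ζ_n⁻¹| ≤ C |β_{n-1} − β_n|` for `n ≥ N + 1`, with a
constant `C` depending only on `c`. -/
theorem zeta_inv_diff_bound (c : ℝ) (hc : 0 < c) :
    ∃ C : ℝ, 0 < C ∧ ∀ (β : ℕ → ℝ) (N : ℕ),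
      (∀ n, N ≤ n → c ≤ |1 - (β n) ^ 2|) →
      ((∀ n, N ≤ n → |β n| ≤ 1) ∨ (∀ n, N ≤ n → 1 < |β n|)) →
      ∀ n, N + 1 ≤ n →
        ‖(zetaSeq β (n - 1))⁻¹ - (zetaSeq β n)⁻¹‖ ≤ C * |β (n - 1) - β n| := by
  set δ := min (2 * c) (1 - (1 + √c)⁻¹)
  have hδ : 0 < δ :=
    lt_min (by positivity) (sub_pos.2 (inv_lt_one_of_one_lt₀ (by simp [hc])))
  refine ⟨2 / δ, by positivity, fun β N hβ hside n hn => ?_⟩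
  have hm : N ≤ n - 1 := by omega
  have hn' : N ≤ n := by omega
  refine norm_inv_sub_inv_le (sq_zetaSeq_sub β (n - 1)) (sq_zetaSeq_sub β n) hδ ?_
  rcases hside with h | h
  · exact (min_le_left _ _).trans <|
      two_mul_le_norm_one_sub_zetaSeq_mul hc.le (h _ hm) (h _ hn') (hβ _ hm) (hβ _ hn')
  · exact (min_le_right _ _).trans <|
      one_sub_inv_le_norm_one_sub_zetaSeq_mul (h _ hm) (h _ hn') (hβ _ hm) (hβ _ hn')
end
end

section
/- Let f_n = Q_n u_n where Q_{n+1}/Q_n = √(a_n/a_{n+1}) ζ_n with ζ_{n} + ζ_n^{-1} = 2β_n, α_n = 1/(2√(a_{n-1}a_n)), β_n = −b_n/(2√(a_{n-1}a_n)), and k_n = a_n/√(a_{n-1}a_{n+1}). Then f satisfies the Jacobi equation a_{n-1}f_{n-1} + (b_n − z) f_n + a_n f_{n+1} = 0 if and only if u satisfies k_n ζ_n (u_{n+1} − u_n) − ζ_{n-1}^{-1}(u_n − u_{n-1}) = −r_n u_n, where r_n = (ζ_{n-1}^{-1} − ζ_n^{-1}) + (k_n − 1)ζ_n − 2 z α_n.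 -/
/-! Since `Q_n = √(a_{n-1}/a_n) ζ_{n-1} Q_{n-1}` and `Q_{n+1} = √(a_n/a_{n+1}) ζ_n Q_n`, the
substituted Jacobi expression is `a_{n-1} ζ_{n-1} Q_{n-1}` times
`k_n ζ_n u_{n+1} + ζ_{n-1}⁻¹ u_{n-1} - (ζ_n + ζ_n⁻¹ + 2 z α_n) u_n`, where `ζ_n + ζ_n⁻¹ = 2β_n`
absorbs `b_n`. Rewriting this bracket through the differences `u_{n+1} - u_n`, `u_n - u_{n-1}`
leaves exactly `r_n u_n`, and the prefactor is nonzero as `a > 0` and `ζ` never vanishes. -/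

open Finset

noncomputable section

/-- `α_n = 1/(2√(a_{n-1}a_n))`. -/
def alphaSeq (a : ℕ → ℝ) (n : ℕ) : ℝ := 1 / (2 * Real.sqrt (a (n - 1) * a n))

/-- `β_n = −b_n/(2√(a_{n-1}a_n))`. -/
def betaSeq (a b : ℕ → ℝ) (n : ℕ) : ℝ := -b n / (2 * Real.sqrt (a (n - 1) * a n))

/-- `k_n = a_n/√(a_{n-1}a_{n+1})`. -/
def kSeq (a : ℕ → ℝ) (n : ℕ) : ℝ := a n / Real.sqrt (a (n - 1) * a (n + 1))

/-- The Ansatz `Q_n = a_n^{-1/2} ζ_0 ⋯ ζ_{n-1}`, so that `Q_{n+1}/Q_n = √(a_n/a_{n+1}) ζ_n`. -/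
def QSeq (a : ℕ → ℝ) (ζ : ℕ → ℂ) (n : ℕ) : ℂ :=
  ((Real.sqrt (a n) : ℂ))⁻¹ * ∏ m ∈ Finset.range n, ζ m

/-- The remainder `r_n = (ζ_{n-1}⁻¹ − ζ_n⁻¹) + (k_n − 1)ζ_n − 2 z α_n`. -/
def rSeq (a : ℕ → ℝ) (ζ : ℕ → ℂ) (z : ℂ) (n : ℕ) : ℂ :=
  ((ζ (n - 1))⁻¹ - (ζ n)⁻¹) + ((kSeq a n : ℝ) - 1 : ℂ) * ζ n - 2 * z * (alphaSeq a n : ℝ)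

theorem QSeq_succ {a : ℕ → ℝ} (ζ : ℕ → ℂ) {n : ℕ} (ha : 0 < a n) :
    QSeq a ζ (n + 1) = (Real.sqrt (a n / a (n + 1)) : ℂ) * ζ n * QSeq a ζ n := by
  have hs : (Real.sqrt (a n) : ℂ) ≠ 0 := by exact_mod_cast (Real.sqrt_pos.2 ha).ne'
  rw [QSeq, QSeq, Finset.prod_range_succ, Real.sqrt_div ha.le]
  push_cast
  field_simp

theorem QSeq_ne_zero {a : ℕ → ℝ} {ζ : ℕ → ℂ} {n : ℕ} (ha : 0 < a n)
    (hζ : ∀ m < n, ζ m ≠ 0) : QSeq a ζ n ≠ 0 := by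
  have hs : (Real.sqrt (a n) : ℂ) ≠ 0 := by exact_mod_cast (Real.sqrt_pos.2 ha).ne'
  exact mul_ne_zero (inv_ne_zero hs)
    (Finset.prod_ne_zero_iff.2 fun m hm => hζ m (Finset.mem_range.1 hm))

section Coefficients

variable {a : ℕ → ℝ} {n : ℕ}

theorem mul_two_mul_alphaSeq (ha₀ : 0 < a (n - 1)) (ha₁ : 0 < a n) :
    a (n - 1) * (2 * alphaSeq a n) = Real.sqrt (a (n - 1) / a n) := by
  have h₀ := Real.sqrt_pos.2 ha₀
  have h₁ := Real.sqrt_pos.2 ha₁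
  rw [alphaSeq, Real.sqrt_mul ha₀.le, Real.sqrt_div ha₀.le]
  field_simp
  rw [Real.sq_sqrt ha₀.le]

theorem mul_two_mul_betaSeq (b : ℕ → ℝ) (ha₀ : 0 < a (n - 1)) (ha₁ : 0 < a n) :
    a (n - 1) * (2 * betaSeq a b n) = -(b n * Real.sqrt (a (n - 1) / a n)) := by
  rw [← mul_two_mul_alphaSeq ha₀ ha₁, betaSeq, alphaSeq]
  ring

theorem mul_kSeq (ha₀ : 0 < a (n - 1)) (ha₁ : 0 < a n) :
    a (n - 1) * kSeq a n = a n * Real.sqrt (a n / a (n + 1)) * Real.sqrt (a (n - 1) / a n) := by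
  have h₀ := Real.sqrt_pos.2 ha₀
  have h₁ := Real.sqrt_pos.2 ha₁
  rw [kSeq, Real.sqrt_mul ha₀.le, Real.sqrt_div ha₀.le, Real.sqrt_div ha₁.le]
  field_simp
  rw [Real.sq_sqrt ha₀.le]

end Coefficients

theorem jacobi_expr_eq_mul_substituted {a b : ℕ → ℝ} {z : ℂ} {ζ f u : ℕ → ℂ} {n : ℕ} (hn : 1 ≤ n)
    (ha : ∀ m, 0 < a m) (hζ₀ : ζ (n - 1) ≠ 0)
    (hζ : ζ n + (ζ n)⁻¹ = 2 * (betaSeq a b n : ℝ)) (hu : ∀ m, f m = QSeq a ζ m * u m) :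
    (a (n - 1) : ℂ) * f (n - 1) + ((b n : ℂ) - z) * f n + (a n : ℂ) * f (n + 1) =
      (a (n - 1) * ζ (n - 1) * QSeq a ζ (n - 1)) *
        (((kSeq a n : ℝ) : ℂ) * ζ n * (u (n + 1) - u n) - (ζ (n - 1))⁻¹ * (u n - u (n - 1)) +
          rSeq a ζ z n * u n) := by
  have hQ : QSeq a ζ n = (Real.sqrt (a (n - 1) / a n) : ℂ) * ζ (n - 1) * QSeq a ζ (n - 1) := by
    simpa only [Nat.sub_add_cancel hn] using QSeq_succ ζ (ha (n - 1))
  have hα : (a (n - 1) : ℂ) * (2 * (alphaSeq a n : ℂ)) = (Real.sqrt (a (n - 1) / a n) : ℂ) := by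
    exact_mod_cast mul_two_mul_alphaSeq (ha (n - 1)) (ha n)
  have hβ : (a (n - 1) : ℂ) * (2 * (betaSeq a b n : ℂ)) =
      -((b n : ℂ) * (Real.sqrt (a (n - 1) / a n) : ℂ)) := by
    exact_mod_cast mul_two_mul_betaSeq b (ha (n - 1)) (ha n)
  have hk : (a (n - 1) : ℂ) * (kSeq a n : ℂ) =
      (a n : ℂ) * (Real.sqrt (a n / a (n + 1)) : ℂ) * (Real.sqrt (a (n - 1) / a n) : ℂ) := by
    exact_mod_cast mul_kSeq (ha (n - 1)) (ha n)
  rw [hu, hu, hu, QSeq_succ ζ (ha n), hQ, rSeq]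
  linear_combination
    (-(a (n - 1) : ℂ) * QSeq a ζ (n - 1) * u (n - 1)) * mul_inv_cancel₀ hζ₀
    - ζ (n - 1) * QSeq a ζ (n - 1) * ζ n * u (n + 1) * hk
    + ζ (n - 1) * QSeq a ζ (n - 1) * u n * hβ
    + (a (n - 1) : ℂ) * ζ (n - 1) * QSeq a ζ (n - 1) * u n * hζ
    + z * ζ (n - 1) * QSeq a ζ (n - 1) * u n * hα

/-- Multiplicative substitution: with `f_n = Q_n u_n` and `ζ_n + ζ_n⁻¹ = 2β_n`, the Jacobi
equation `a_{n-1}f_{n-1} + (b_n − z) f_n + a_n f_{n+1} = 0` at `n` is equivalent to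
`k_n ζ_n (u_{n+1} − u_n) − ζ_{n-1}⁻¹(u_n − u_{n-1}) = −r_n u_n`. -/
theorem multiplicative_substitution (a b : ℕ → ℝ) (z : ℂ) (ζ : ℕ → ℂ) (f u : ℕ → ℂ) (n : ℕ)
    (hn : 1 ≤ n) (ha : ∀ m, 0 < a m) (hζ0 : ∀ m, ζ m ≠ 0)
    (hζ : ζ n + (ζ n)⁻¹ = 2 * (betaSeq a b n : ℝ))
    (hu : ∀ m, f m = QSeq a ζ m * u m) :
    ((a (n - 1) : ℂ) * f (n - 1) + ((b n : ℂ) - z) * f n + (a n : ℂ) * f (n + 1) = 0) ↔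
      ((kSeq a n : ℝ) : ℂ) * ζ n * (u (n + 1) - u n) - (ζ (n - 1))⁻¹ * (u n - u (n - 1)) =
        -(rSeq a ζ z n) * u n := by
  have hfactor : (a (n - 1) * ζ (n - 1) * QSeq a ζ (n - 1) : ℂ) ≠ 0 :=
    mul_ne_zero (mul_ne_zero (Complex.ofReal_ne_zero.2 (ha (n - 1)).ne') (hζ0 (n - 1)))
      (QSeq_ne_zero (ha (n - 1)) fun m _ => hζ0 m)
  rw [jacobi_expr_eq_mul_substituted hn ha (hζ0 (n - 1)) hζ hu, mul_eq_zero, or_iff_right hfactor,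
    neg_mul, eq_neg_iff_add_eq_zero]
end
end

section
/- Let f_n(z) = Q_n u_n(z) solve the Jacobi equation, where Q_n ≠ 0, and suppose there are constants C_n and a sequence ε_m → 0 with |u_m(z)| ≤ 2 e^{ε_m |z|} for all m and z ∈ ℂ, and |u_n(z)| ≤ C_n (1+|z|)(|u_{n+1}(z)| + |u_{n+2}(z)|) from the recurrence. Then each u_n is of minimal exponential type: for every ε > 0 there is C_n(ε) with |u_n(z)| ≤ C_n(ε) e^{ε|z|} for all z ∈ ℂ. -/
/-!
Iterating the recurrence `k` times bounds `|u_n(z)|` by a polynomial of degree `k` in `|z|` times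
`|u_{n+k}(z)| + |u_{n+k+1}(z)|`. Choosing `k` so large that `ε_m < δ/2` for `m ≥ k`, the tail
bound makes this at most `(1+|z|)^k · 4e^{δ|z|/2}`, and the polynomial factor is absorbed into a
second `e^{δ|z|/2}`.
-/

open Filter Finset

lemma one_add_pow_le_mul_exp {c : ℝ} (hc : 0 < c) (d : ℕ) {t : ℝ} (ht : 0 ≤ t) :
    (1 + t) ^ d ≤ (1 + d / c) ^ d * Real.exp (c * t) := by
  rcases Nat.eq_zero_or_pos d with rfl | hd
  · simpa using Real.one_le_exp (by positivity)
  have hd' : (0 : ℝ) < d := by exact_mod_cast hd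
  have hlin : 1 + t ≤ (1 + d / c) * Real.exp (c / d * t) :=
    calc 1 + t ≤ (1 + d / c) * (1 + c / d * t) := by
          have : (1 + d / c) * (1 + c / d * t) = 1 + t + (d / c + c / d * t) := by
            field_simp
            ring
          have : 0 ≤ d / c + c / d * t := by positivity
          linarith
      _ ≤ (1 + d / c) * Real.exp (c / d * t) := by
          gcongr
          linarith [Real.add_one_le_exp (c / d * t)]
  calc (1 + t) ^ d ≤ ((1 + d / c) * Real.exp (c / d * t)) ^ d := by gcongr
    _ = (1 + d / c) ^ d * Real.exp (c * t) := by
        rw [mul_pow, ← Real.exp_nat_mul]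
        field_simp

lemma le_prod_mul_pow_mul_of_le_mul {s A : ℕ → ℝ} {w : ℝ} (hA : ∀ n, 0 ≤ A n) (hw : 0 ≤ w)
    (h : ∀ n, s n ≤ A n * w * s (n + 1)) (n k : ℕ) :
    s n ≤ (∏ i ∈ range k, A (n + i)) * w ^ k * s (n + k) := by
  induction k with
  | zero => simp
  | succ k ih =>
    have hPk : 0 ≤ (∏ i ∈ range k, A (n + i)) * w ^ k := by
      have := prod_nonneg fun i (_ : i ∈ range k) => hA (n + i)
      positivity
    calc s n ≤ (∏ i ∈ range k, A (n + i)) * w ^ k * s (n + k) := ih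
      _ ≤ (∏ i ∈ range k, A (n + i)) * w ^ k * (A (n + k) * w * s (n + k + 1)) := by
          gcongr
          exact h _
      _ = (∏ i ∈ range (k + 1), A (n + i)) * w ^ (k + 1) * s (n + (k + 1)) := by
          rw [prod_range_succ, pow_succ, ← add_assoc]
          ring

section Recurrence

variable {E F : Type*} [SeminormedAddCommGroup E] [SeminormedAddCommGroup F]

/-- Summing consecutive terms turns the two-step recurrence estimate into a one-step one. -/
lemma norm_add_norm_succ_le_of_recurrence {u : ℕ → E → F} {C : ℕ → ℝ}
    (hrec : ∀ n z, ‖u n z‖ ≤ C n * (1 + ‖z‖) * (‖u (n + 1) z‖ + ‖u (n + 2) z‖)) (n : ℕ) (z : E) :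
    ‖u n z‖ + ‖u (n + 1) z‖ ≤
      (max (C n) 0 + 1) * (1 + ‖z‖) * (‖u (n + 1) z‖ + ‖u (n + 1 + 1) z‖) := by
  have hz : 1 ≤ 1 + ‖z‖ := le_add_of_nonneg_right (norm_nonneg z)
  have hnext : 0 ≤ ‖u (n + 1) z‖ + ‖u (n + 2) z‖ := by positivity
  have hn : ‖u n z‖ ≤ max (C n) 0 * (1 + ‖z‖) * (‖u (n + 1) z‖ + ‖u (n + 2) z‖) :=
    (hrec n z).trans (by gcongr; exact le_max_left _ _)
  have hsucc : ‖u (n + 1) z‖ ≤ (1 + ‖z‖) * (‖u (n + 1) z‖ + ‖u (n + 2) z‖) :=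
    (le_add_of_nonneg_right (norm_nonneg _)).trans (le_mul_of_one_le_left hnext hz)
  linarith

lemma norm_le_prod_mul_pow_mul_of_recurrence {u : ℕ → E → F} {C : ℕ → ℝ}
    (hrec : ∀ n z, ‖u n z‖ ≤ C n * (1 + ‖z‖) * (‖u (n + 1) z‖ + ‖u (n + 2) z‖))
    (n k : ℕ) (z : E) :
    ‖u n z‖ ≤ (∏ i ∈ range k, (max (C (n + i)) 0 + 1)) * (1 + ‖z‖) ^ k *
      (‖u (n + k) z‖ + ‖u (n + k + 1) z‖) :=
  (le_add_of_nonneg_right (norm_nonneg _)).trans <|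
    le_prod_mul_pow_mul_of_le_mul (s := fun m => ‖u m z‖ + ‖u (m + 1) z‖)
      (fun _ => by positivity) (by positivity)
      (norm_add_norm_succ_le_of_recurrence hrec · z) n k

end Recurrence

/-- Minimal exponential type: if `|u_m(z)| ≤ 2 e^{ε_m |z|}` with `ε_m → 0`, and each `u_n`
satisfies the recurrence estimate `|u_n(z)| ≤ C_n (1+|z|)(|u_{n+1}(z)| + |u_{n+2}(z)|)`,
then for every `ε > 0` there is `C_n(ε)` with `|u_n(z)| ≤ C_n(ε) e^{ε|z|}` for all `z`. -/
theorem minimal_exponential_type (u : ℕ → ℂ → ℂ) (ε : ℕ → ℝ) (C : ℕ → ℝ)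
    (hε : Tendsto ε atTop (nhds 0))
    (hbd : ∀ m z, ‖u m z‖ ≤ 2 * Real.exp (ε m * ‖z‖))
    (hrec : ∀ n z, ‖u n z‖ ≤
      C n * (1 + ‖z‖) * (‖u (n + 1) z‖ + ‖u (n + 2) z‖)) :
    ∀ n : ℕ, ∀ δ : ℝ, 0 < δ → ∃ K : ℝ,
      ∀ z : ℂ, ‖u n z‖ ≤ K * Real.exp (δ * ‖z‖) := by
  intro n δ hδ
  obtain ⟨N, hN⟩ := (hε.eventually (gt_mem_nhds (half_pos hδ))).exists_forall_of_atTop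
  have htail : ∀ m ≥ N, ∀ z, ‖u m z‖ ≤ 2 * Real.exp (δ / 2 * ‖z‖) := fun m hm z =>
    (hbd m z).trans (by gcongr; exact (hN m hm).le)
  set P := ∏ i ∈ range N, (max (C (n + i)) 0 + 1)
  have hP : 0 ≤ P := prod_nonneg fun _ _ => by positivity
  refine ⟨P * (1 + N / (δ / 2)) ^ N * 4, fun z => ?_⟩
  calc ‖u n z‖ ≤ P * (1 + ‖z‖) ^ N * (‖u (n + N) z‖ + ‖u (n + N + 1) z‖) :=
        norm_le_prod_mul_pow_mul_of_recurrence hrec n N z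
    _ ≤ P * ((1 + N / (δ / 2)) ^ N * Real.exp (δ / 2 * ‖z‖)) *
          (2 * Real.exp (δ / 2 * ‖z‖) + 2 * Real.exp (δ / 2 * ‖z‖)) := by
        gcongr
        · exact one_add_pow_le_mul_exp (half_pos hδ) N (norm_nonneg z)
        · exact htail _ (by omega) z
        · exact htail _ (by omega) z
    _ = P * (1 + N / (δ / 2)) ^ N * 4 * Real.exp (δ * ‖z‖) := by
        rw [show δ * ‖z‖ = δ / 2 * ‖z‖ + δ / 2 * ‖z‖ by ring, Real.exp_add]
        ring
end
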